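/- Let φ = (1+√5)/2 be the golden ratio. Then for every real number β > 2, lim_{N→∞} (log Z_N(φ;β))/N = β·log φ. -/

import Mathlib

/-!
Write `Z_N(x, y) = Σ_σ |x p_σ + y q_σ|^{-β}`, so that `Z_N(φ;β) = Z_N(1, -φ)`. Splitting off the
first matrix gives `Z_{N+1}(x, y) = Z_N(x + y, y) + Z_N(x, x + y)`. Because `φ - 1 = φ⁻¹`, one of
the two terms of `Z_{N+1}(1, -φ)` is `φ^β Z_N(φ, -1)` by homogeneity, and vice versa; the other
term has both arguments `≥ φ⁻¹`, so it is at most `2^N φ^β`. For `β > 2` we have `φ^β > 2`, so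
these terms are negligible and `Z_N(φ;β)` lies between two constant multiples of `φ^{βN}`.
-/

/-- The Farey matrix `A₀ = [[1,0],[1,1]]`. -/
def A0 : Matrix (Fin 2) (Fin 2) ℤ := !![1, 0; 1, 1]

/-- The Farey matrix `A₁ = [[1,1],[0,1]]`. -/
def A1 : Matrix (Fin 2) (Fin 2) ℤ := !![1, 1; 0, 1]

/-- The product `A_{σ₁}A_{σ₂}⋯A_{σ_N}` associated to a word `σ ∈ {0,1}^N`
(`false` codes `0`, `true` codes `1`). -/
def wordProd {N : ℕ} (σ : Fin N → Bool) : Matrix (Fin 2) (Fin 2) ℤ :=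
  (List.ofFn fun i => if σ i then A1 else A0).prod

/-- The Diophantine partition function
`Z_N(α;β) = Σ_{σ ∈ {0,1}^N} |p_σ - α q_σ|^{-β}`, where `(p_σ, q_σ)` is the
right column of `A_{σ₁}⋯A_{σ_N}`. -/
noncomputable def Zpart (N : ℕ) (α β : ℝ) : ℝ :=
  ∑ σ : Fin N → Bool,
    |((wordProd σ 0 1 : ℤ) : ℝ) - α * ((wordProd σ 1 1 : ℤ) : ℝ)| ^ (-β)

/-- Iterates of the Gauss map starting at `α`: `x₀ = α`, `x_{m+1} = 1/(x_m - ⌊x_m⌋)`. -/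
noncomputable def gaussIter (α : ℝ) : ℕ → ℝ
  | 0 => α
  | n + 1 => (gaussIter α n - (⌊gaussIter α n⌋ : ℝ))⁻¹

/-- The continued fraction coefficients of `α`: `a_m = ⌊x_m⌋`. -/
noncomputable def cfA (α : ℝ) (n : ℕ) : ℤ := ⌊gaussIter α n⌋

/-- Numerators of the convergents, shifted by one: `pConv a (m+1) = p_m`, with
`p₋₁ = 1`, `p₀ = a₀`, `p_m = a_m p_{m-1} + p_{m-2}`. -/
def pConv (a : ℕ → ℤ) : ℕ → ℤ
  | 0 => 1
  | 1 => a 0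
  | n + 2 => a (n + 1) * pConv a (n + 1) + pConv a n

/-- Denominators of the convergents, shifted by one: `qConv a (m+1) = q_m`, with
`q₋₁ = 0`, `q₀ = 1`, `q_m = a_m q_{m-1} + q_{m-2}`. -/
def qConv (a : ℕ → ℤ) : ℕ → ℤ
  | 0 => 0
  | 1 => 1
  | n + 2 => a (n + 1) * qConv a (n + 1) + qConv a n

/-- `N_m = a₀ + a₁ + ⋯ + a_m`. -/
def Nsum (a : ℕ → ℤ) (m : ℕ) : ℤ := ∑ i ∈ Finset.range (m + 1), a i

open Real Filter Topology goldenRatio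

lemma wordProd_cons {N : ℕ} (b : Bool) (σ : Fin N → Bool) :
    wordProd (Fin.cons b σ) = (if b then A1 else A0) * wordProd σ := by
  simp [wordProd, List.ofFn_succ, Fin.cons_succ]

noncomputable def Zform (N : ℕ) (x y β : ℝ) : ℝ :=
  ∑ σ : Fin N → Bool,
    |x * ((wordProd σ 0 1 : ℤ) : ℝ) + y * ((wordProd σ 1 1 : ℤ) : ℝ)| ^ (-β)

lemma Zpart_eq_Zform (N : ℕ) (α β : ℝ) : Zpart N α β = Zform N 1 (-α) β := by
  simp only [Zpart, Zform, one_mul, neg_mul, sub_eq_add_neg]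

section Zform

variable {N : ℕ} {x y β : ℝ}

lemma Zform_zero : Zform 0 x y β = |y| ^ (-β) := by
  simp [Zform, wordProd]

lemma Zform_succ : Zform (N + 1) x y β = Zform N (x + y) y β + Zform N x (x + y) β := by
  rw [Zform, ← (Fin.consEquiv fun _ => Bool).sum_comp, Fintype.sum_prod_type,
    Fintype.sum_bool, add_comm]
  congr 1 <;> refine Finset.sum_congr rfl fun σ _ => ?_
  all_goals
    simp [Fin.consEquiv, wordProd_cons, A0, A1, Matrix.mul_apply]
    ring_nf

lemma Zform_nonneg : 0 ≤ Zform N x y β :=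
  Finset.sum_nonneg fun _ _ => rpow_nonneg (abs_nonneg _) _

lemma Zform_mul (c : ℝ) : Zform N (c * x) (c * y) β = |c| ^ (-β) * Zform N x y β := by
  simp only [Zform, Finset.mul_sum, mul_assoc, ← mul_add, abs_mul,
    mul_rpow (abs_nonneg c) (abs_nonneg _)]

lemma Zform_neg : Zform N (-x) (-y) β = Zform N x y β := by
  simpa using Zform_mul (N := N) (x := x) (y := y) (β := β) (-1)

lemma Zform_le_two_pow_mul {m : ℝ} (hβ : 0 ≤ β) (hm : 0 < m) (hx : m ≤ x) (hy : m ≤ y) :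
    Zform N x y β ≤ 2 ^ N * m ^ (-β) := by
  induction N generalizing x y with
  | zero =>
    rw [Zform_zero, abs_of_pos (hm.trans_le hy), pow_zero, one_mul]
    exact rpow_le_rpow_of_nonpos hm hy (neg_nonpos.mpr hβ)
  | succ N ih =>
    rw [Zform_succ, pow_succ]
    linarith [ih (x := x + y) (by linarith) hy, ih (y := x + y) hx (by linarith)]

end Zform

lemma le_mul_pow_of_le_mul_add_mul_pow {u : ℕ → ℝ} {P r c : ℝ} (hr : 0 ≤ r) (hrP : r < P)
    (hc : 0 ≤ c) (hu : ∀ n, u (n + 1) ≤ P * u n + c * r ^ n) (n : ℕ) :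
    u n ≤ (u 0 + c / (P - r)) * P ^ n := by
  -- `u n + D r^n` is dominated by the geometric sequence of ratio `P`
  set D := c / (P - r)
  have hD : c + r * D = P * D := by
    simp only [D]
    field_simp [(sub_pos.mpr hrP).ne']
    ring
  have hv := le_geom (u := fun n => u n + D * r ^ n) (hr.trans hrP.le) n fun k _ => by
    simp only [pow_succ]
    nlinarith [hu k, pow_nonneg hr k]
  have : 0 ≤ D * r ^ n := mul_nonneg (div_nonneg hc (sub_pos.mpr hrP).le) (pow_nonneg hr n)
  simp only [pow_zero, mul_one] at hv
  linarith

lemma tendsto_log_div_of_le_mul_pow {u : ℕ → ℝ} {P c₁ c₂ : ℝ} (hP : 0 < P) (hc₁ : 0 < c₁)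
    (hlo : ∀ n, c₁ * P ^ n ≤ u n) (hhi : ∀ n, u n ≤ c₂ * P ^ n) :
    Tendsto (fun n : ℕ => log (u n) / n) atTop (𝓝 (log P)) := by
  have hc₂ : 0 < c₂ := by
    have := (hlo 0).trans (hhi 0)
    rw [pow_zero, mul_one, mul_one] at this
    linarith
  have hlog : ∀ c : ℝ, 0 < c → ∀ n : ℕ, log (c * P ^ n) = log c + n * log P := fun c hc n => by
    rw [log_mul hc.ne' (pow_pos hP n).ne', log_pow]
  have hlim : ∀ c : ℝ, Tendsto (fun n : ℕ => (log c + n * log P) / n) atTop (𝓝 (log P)) :=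
    fun c => by
      have := (tendsto_const_div_atTop_nhds_zero_nat (log c)).add_const (log P)
      rw [zero_add] at this
      refine this.congr' ?_
      filter_upwards [eventually_ne_atTop 0] with n hn
      field_simp
  refine tendsto_of_tendsto_of_tendsto_of_le_of_le (hlim c₁) (hlim c₂) (fun n => ?_) (fun n => ?_)
  · rw [← hlog c₁ hc₁]
    exact div_le_div_of_nonneg_right (log_le_log (by positivity) (hlo n)) n.cast_nonneg
  · rw [← hlog c₂ hc₂]
    exact div_le_div_of_nonneg_right
      (log_le_log ((mul_pos hc₁ (pow_pos hP n)).trans_le (hlo n)) (hhi n)) n.cast_nonneg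

section golden

variable {N : ℕ} {β : ℝ}

lemma goldenRatio_sub_one : φ - 1 = φ⁻¹ := by
  rw [inv_goldenRatio, ← one_sub_goldenConj]
  ring

lemma inv_goldenRatio_rpow_neg : φ⁻¹ ^ (-β) = φ ^ β := by
  rw [inv_rpow goldenRatio_pos.le, rpow_neg goldenRatio_pos.le, inv_inv]

lemma Zform_one_neg_goldenRatio_succ :
    Zform (N + 1) 1 (-φ) β = Zform N (φ - 1) φ β + φ ^ β * Zform N φ (-1) β := by
  have h := Zform_mul (N := N) (x := φ) (y := -1) (β := β) φ⁻¹
  rw [inv_mul_cancel₀ goldenRatio_ne_zero, abs_of_pos (inv_pos.mpr goldenRatio_pos),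
    inv_goldenRatio_rpow_neg] at h
  rw [Zform_succ, ← h]
  congr 1
  · rw [← Zform_neg]
    congr 1 <;> ring
  · rw [← goldenRatio_sub_one]
    ring_nf

lemma Zform_goldenRatio_neg_one_succ :
    Zform (N + 1) φ (-1) β = φ ^ β * Zform N 1 (-φ) β + Zform N φ (φ - 1) β := by
  have h := Zform_mul (N := N) (x := 1) (y := -φ) (β := β) φ⁻¹
  rw [abs_of_pos (inv_pos.mpr goldenRatio_pos), inv_goldenRatio_rpow_neg] at h
  rw [Zform_succ, ← h, mul_neg, inv_mul_cancel₀ goldenRatio_ne_zero, ← goldenRatio_sub_one]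
  ring_nf

lemma two_lt_goldenRatio_rpow (hβ : 2 < β) : 2 < φ ^ β := by
  have h : φ ^ (2 : ℝ) < φ ^ β := rpow_lt_rpow_of_exponent_lt one_lt_goldenRatio hβ
  rw [rpow_two, goldenRatio_sq] at h
  linarith [one_lt_goldenRatio]

lemma goldenRatio_rpow_pow_mul_le_Zform (N : ℕ) :
    (φ ^ β) ^ N * min (Zform 0 1 (-φ) β) (Zform 0 φ (-1) β) ≤ Zform N 1 (-φ) β := by
  refine (geom_le (u := fun n => min (Zform n 1 (-φ) β) (Zform n φ (-1) β))
    (rpow_nonneg goldenRatio_pos.le β) N fun k _ => ?_).trans (min_le_left _ _)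
  rw [mul_min_of_nonneg _ _ (rpow_nonneg goldenRatio_pos.le β), min_comm]
  refine min_le_min ?_ ?_
  · rw [Zform_one_neg_goldenRatio_succ]
    linarith [Zform_nonneg (N := k) (x := φ - 1) (y := φ) (β := β)]
  · rw [Zform_goldenRatio_neg_one_succ]
    linarith [Zform_nonneg (N := k) (x := φ) (y := φ - 1) (β := β)]

lemma Zform_one_neg_goldenRatio_le (hβ : 2 < β) (N : ℕ) :
    Zform N 1 (-φ) β ≤ (Zform 0 1 (-φ) β + Zform 0 φ (-1) β + 2 * φ ^ β / (φ ^ β - 2))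
      * (φ ^ β) ^ N := by
  have hinv_le : φ⁻¹ ≤ φ := (inv_lt_one_of_one_lt₀ one_lt_goldenRatio).le.trans one_lt_goldenRatio.le
  have hm : 0 < φ⁻¹ := inv_pos.mpr goldenRatio_pos
  have hstep (n : ℕ) : Zform (n + 1) 1 (-φ) β + Zform (n + 1) φ (-1) β ≤
      φ ^ β * (Zform n 1 (-φ) β + Zform n φ (-1) β) + 2 * φ ^ β * 2 ^ n := by
    have h₁ := Zform_le_two_pow_mul (N := n) (β := β) (by linarith) hm goldenRatio_sub_one.ge hinv_le
    have h₂ := Zform_le_two_pow_mul (N := n) (β := β) (by linarith) hm hinv_le goldenRatio_sub_one.ge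
    rw [inv_goldenRatio_rpow_neg] at h₁ h₂
    rw [Zform_one_neg_goldenRatio_succ, Zform_goldenRatio_neg_one_succ]
    linarith
  have := le_mul_pow_of_le_mul_add_mul_pow (u := fun n => Zform n 1 (-φ) β + Zform n φ (-1) β)
    (c := 2 * φ ^ β) zero_le_two (two_lt_goldenRatio_rpow hβ) (by positivity) hstep N
  linarith [Zform_nonneg (N := N) (x := φ) (y := -1) (β := β)]

end golden

theorem stmt13 (β : ℝ) (hβ : 2 < β) :
    Filter.Tendsto
      (fun N : ℕ => Real.log (Zpart N ((1 + Real.sqrt 5) / 2) β) / (N : ℝ))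
      Filter.atTop (nhds (β * Real.log ((1 + Real.sqrt 5) / 2))) := by
  rw [← log_rpow goldenRatio_pos]
  simp only [Zpart_eq_Zform]
  refine tendsto_log_div_of_le_mul_pow (rpow_pos_of_pos goldenRatio_pos β) ?_
    (fun N => (mul_comm _ _).trans_le (goldenRatio_rpow_pow_mul_le_Zform N))
    (Zform_one_neg_goldenRatio_le hβ)
  simp only [Zform_zero, abs_neg, abs_one, one_rpow, abs_of_pos goldenRatio_pos]
  exact lt_min (rpow_pos_of_pos goldenRatio_pos _) one_pos
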